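/- Let 0 < p ≤ 1. Let {(w^k, λ^k, ζ^k, β^k)} ⊆ ℝⁿ × ℝ^r × ℝⁿ × ℝ^r be a sequence produced by the smoothing method: there are sequences μ_k > 0 with μ_k → 0 and ε̂_k ≥ 0 with ε̂_k → 0 such that for every k, (w^k, λ^k, ζ^k, β^k) is an ε̂_{k−1}-approximate KKT point of the smoothed one-level problem with smoothing parameter μ_{k−1}. Suppose Assumptions A1–A4 hold. Then {(w^k, λ^k, ζ^k, β^k)} has at least one accumulation point, and every accumulation point (w*, λ*, ζ*, β*) satisfies: (1) ζ_i* = 0 for all i ∈ I(w*), and (2) p Σ_{i∉I(w*)} sgn(w_i*) |w_i*|^{p−1} ζ_i* = β₁*. -/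

import Mathlib

open Filter Topology Finset

/-- Partial derivative `∂h/∂wᵢ (w)`. -/
noncomputable def pd {n : ℕ} (h : (Fin n → ℝ) → ℝ) (w : Fin n → ℝ) (i : Fin n) : ℝ :=
  fderiv ℝ h w (Pi.single i 1)

/-- Second partial derivative `∂²h/∂wᵢ∂wⱼ (w)`. -/
noncomputable def pd2 {n : ℕ} (h : (Fin n → ℝ) → ℝ) (w : Fin n → ℝ) (i j : Fin n) : ℝ :=
  pd (fun x => pd h x j) w i

/-- `(∇φ_μ)ᵢ` at a scalar coordinate `x`: `p x (x² + μ²)^{p/2−1}`. -/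
noncomputable def dphi (p μ x : ℝ) : ℝ := p * x * (x ^ 2 + μ ^ 2) ^ (p / 2 - 1)

/-- `(∇²φ_μ)ᵢᵢ` at a scalar coordinate `x`:
`p (x² + μ²)^{p/2−1} + p(p−2) x² (x² + μ²)^{p/2−2}`. -/
noncomputable def d2phi (p μ x : ℝ) : ℝ :=
  p * (x ^ 2 + μ ^ 2) ^ (p / 2 - 1) + p * (p - 2) * x ^ 2 * (x ^ 2 + μ ^ 2) ^ (p / 2 - 2)

/-- `(w, λ, ζ, β)` is an `ε̂`-approximate KKT point of the smoothed one-level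
problem with smoothing parameter `μ`. -/
def ApproxKKT {n r : ℕ} [NeZero r] (p : ℝ)
    (f : (Fin n → ℝ) → ℝ) (R : Fin r → (Fin n → ℝ) → ℝ)
    (G : (Fin n → ℝ) → (Fin r → ℝ) → ℝ)
    (w : Fin n → ℝ) (lam : Fin r → ℝ) (zeta : Fin n → ℝ) (beta : Fin r → ℝ)
    (μ εhat : ℝ) : Prop :=
  ∃ (e1 : Fin n → ℝ) (e2 : ℝ) (e3 : Fin r → ℝ) (e4 : Fin n → ℝ) (e5 : ℝ),
    (∀ i, pd f w i
        + ((∑ j, pd2 (fun x => G x lam) w i j * zeta j)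
          + lam 0 * d2phi p μ (w i) * zeta i) = e1 i) ∧
    ((∑ i, dphi p μ (w i) * zeta i) - beta 0 = e2) ∧
    (∀ i : Fin r, i ≠ 0 → (∑ j, pd (R i) w j * zeta j) - beta i = e3 i) ∧
    (∀ i, pd (fun x => G x lam) w i + lam 0 * dphi p μ (w i) = e4 i) ∧
    (∀ i, 0 ≤ lam i) ∧ (∀ i, 0 ≤ beta i) ∧ ((∑ i, lam i * beta i) = e5) ∧
    Real.sqrt ((∑ i, (e1 i) ^ 2) + e2 ^ 2
        + (∑ i ∈ univ.filter (fun i : Fin r => i ≠ 0), (e3 i) ^ 2)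
        + (∑ i, (e4 i) ^ 2) + e5 ^ 2) ≤ εhat

/-- The constraint function `Φᵢ(w, λ) = ∂G/∂wᵢ(w, λ̄) + p sgn(wᵢ) λ₁ |wᵢ|^{p−1}`
seen as a function on `ℝⁿ × ℝʳ`. -/
noncomputable def PhiC {n r : ℕ} [NeZero r] (p : ℝ)
    (G : (Fin n → ℝ) → (Fin r → ℝ) → ℝ) (i : Fin n)
    (x : (Fin n → ℝ) × (Fin r → ℝ)) : ℝ :=
  pd (fun w => G w x.2) x.1 i + p * Real.sign (x.1 i) * x.2 0 * |x.1 i| ^ (p - 1)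

/-- The gradient of `Φᵢ` with respect to `(w, λ)`, written blockwise. -/
noncomputable def gradPhiC {n r : ℕ} [NeZero r] (p : ℝ)
    (G : (Fin n → ℝ) → (Fin r → ℝ) → ℝ) (i : Fin n)
    (x : (Fin n → ℝ) × (Fin r → ℝ)) : (Fin n → ℝ) × (Fin r → ℝ) :=
  (fun j => fderiv ℝ (PhiC p G i) x (Pi.single j 1, 0),
   fun j => fderiv ℝ (PhiC p G i) x (0, Pi.single j 1))

/-- The LICQ (Assumption A4) at `(w*, λ*)`: the gradients `∇Φᵢ(w*, λ*)` for
`i ∉ I(w*)`, together with the coordinate vectors `eᵢ^{(w)}` for `i ∈ I(w*)` and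
`eᵢ^{(λ)}` for `i ∈ I(λ*)`, are linearly independent in `ℝⁿ × ℝʳ`. -/
def LICQ {n r : ℕ} [NeZero r] (p : ℝ)
    (G : (Fin n → ℝ) → (Fin r → ℝ) → ℝ)
    (wstar : Fin n → ℝ) (lamstar : Fin r → ℝ) : Prop :=
  LinearIndependent ℝ
    (Sum.elim (fun i : {i : Fin n // wstar i ≠ 0} => gradPhiC p G i.1 (wstar, lamstar))
      (Sum.elim
        (fun i : {i : Fin n // wstar i = 0} =>
          ((Pi.single i.1 1, 0) : (Fin n → ℝ) × (Fin r → ℝ)))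
        (fun j : {j : Fin r // lamstar j = 0} =>
          ((0, Pi.single j.1 1) : (Fin n → ℝ) × (Fin r → ℝ)))))

/-!
Along an ultrafilter finer than `atTop` the bounded sequence `(wᵏ, λᵏ)` converges, to some
`(w*, λ*)` with `λ₁* > 0` by A1. On a coordinate with `w*ᵢ = 0` the feasibility residual makes
`∇φ_μ(wᵢ)` converge, so the curvature `∇²φ_μ(wᵢ)` blows up (for `p = 1` this is where A3 enters),
and the stationarity residual then forces `ζᵢ → 0`. On a coordinate with `w*ᵢ ≠ 0`, `∇φ_μ(wᵢ)`
tends to `p sgn(w*ᵢ) |w*ᵢ|^{p−1}`, which turns the second residual into the identity for `β₁*`.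
The same limit argument applied to `(ζᵏ, βᵏ) / (1 + ‖(ζᵏ, βᵏ)‖)` shows that `(ζᵏ, βᵏ)` cannot be
unbounded: otherwise it would produce a nonzero solution of the abnormal limiting system, that is,
a vanishing nontrivial combination of the LICQ vectors of A4.
-/

lemma sq_rpow_half (c q : ℝ) : (c ^ 2) ^ (q / 2) = |c| ^ q := by
  rw [← sq_abs, ← Real.rpow_natCast, ← Real.rpow_mul (abs_nonneg c)]
  congr 1
  ring

lemma sign_mul_abs_self (c : ℝ) : Real.sign c * |c| = c := by
  rcases lt_trichotomy c 0 with h | rfl | h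
  · rw [Real.sign_of_neg h, abs_of_neg h]; ring
  · simp
  · rw [Real.sign_of_pos h, abs_of_pos h]; ring

lemma dphi_zero_smoothing (p : ℝ) {c : ℝ} (hc : c ≠ 0) :
    dphi p 0 c = p * Real.sign c * |c| ^ (p - 1) := by
  have habs : |c| ≠ 0 := abs_ne_zero.2 hc
  rw [dphi, zero_pow two_ne_zero, add_zero, show p / 2 - 1 = (p - 2) / 2 by ring, sq_rpow_half,
    show p - 1 = p - 2 + 1 by ring, Real.rpow_add_one habs]
  nth_rw 1 [← sign_mul_abs_self c]
  ring

lemma d2phi_zero_smoothing (p : ℝ) {c : ℝ} (hc : c ≠ 0) :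
    d2phi p 0 c = p * (p - 1) * |c| ^ (p - 2) := by
  have habs : |c| ≠ 0 := abs_ne_zero.2 hc
  rw [d2phi, zero_pow two_ne_zero, add_zero, show p / 2 - 1 = (p - 2) / 2 by ring,
    show p / 2 - 2 = (p - 4) / 2 by ring, sq_rpow_half, sq_rpow_half, ← sq_abs c,
    show p - 2 = p - 4 + 2 by ring, Real.rpow_add (abs_pos.2 hc), Real.rpow_two]
  ring

lemma continuousAt_dphi (p : ℝ) {c : ℝ} (hc : c ≠ 0) :
    ContinuousAt (fun y : ℝ × ℝ => dphi p y.1 y.2) (0, c) := by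
  unfold dphi
  have : (0, c).2 ^ 2 + (0, c).1 ^ 2 ≠ (0 : ℝ) := by simpa using hc
  exact (continuousAt_const.mul continuousAt_snd).mul
    (((continuousAt_snd.pow 2).add (continuousAt_fst.pow 2)).rpow_const (Or.inl this))

lemma continuousAt_d2phi (p : ℝ) {c : ℝ} (hc : c ≠ 0) :
    ContinuousAt (fun y : ℝ × ℝ => d2phi p y.1 y.2) (0, c) := by
  unfold d2phi
  have : (0, c).2 ^ 2 + (0, c).1 ^ 2 ≠ (0 : ℝ) := by simpa using hc
  have ht := (continuousAt_snd.pow 2).add (continuousAt_fst.pow 2) (x := ((0 : ℝ), c))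
  exact (continuousAt_const.mul (ht.rpow_const (Or.inl this))).add
    ((continuousAt_const.mul (continuousAt_snd.pow 2)).mul (ht.rpow_const (Or.inl this)))

lemma d2phi_eq_rpow_mul (p : ℝ) {μ : ℝ} (hμ : μ ≠ 0) (x : ℝ) :
    d2phi p μ x
      = p * (x ^ 2 + μ ^ 2) ^ (p / 2 - 1) * (1 - (2 - p) * (x ^ 2 / (x ^ 2 + μ ^ 2))) := by
  have ht : x ^ 2 + μ ^ 2 ≠ 0 := by positivity
  rw [d2phi, show p / 2 - 1 = p / 2 - 2 + 1 by ring, Real.rpow_add_one ht]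
  generalize x ^ 2 + μ ^ 2 = t at ht ⊢
  field_simp
  ring

lemma sq_div_eq_dphi_sq {p μ : ℝ} (hp : p ≠ 0) (hμ : μ ≠ 0) (x : ℝ) :
    x ^ 2 / (x ^ 2 + μ ^ 2) = (dphi p μ x / p) ^ 2 * (x ^ 2 + μ ^ 2) ^ (1 - p) := by
  have ht : 0 < x ^ 2 + μ ^ 2 := by positivity
  have hpow : ((x ^ 2 + μ ^ 2) ^ (p / 2 - 1)) ^ 2 * (x ^ 2 + μ ^ 2) ^ (1 - p)
      = (x ^ 2 + μ ^ 2)⁻¹ := by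
    rw [← Real.rpow_natCast, ← Real.rpow_mul ht.le, ← Real.rpow_add ht, ← Real.rpow_neg_one]
    congr 1
    push_cast
    ring
  rw [dphi, mul_assoc, mul_div_cancel_left₀ _ hp, mul_pow, mul_assoc, hpow, div_eq_mul_inv]

section SmoothingLimits

variable {α : Type*} {F : Filter α} {p c : ℝ} {μ x : α → ℝ}

lemma tendsto_zero_of_abs_le {u e : α → ℝ} (h : ∀ k, |u k| ≤ e k)
    (he : Tendsto e F (𝓝 0)) : Tendsto u F (𝓝 0) :=
  squeeze_zero_norm h he

lemma tendsto_zero_of_tendsto_mul_of_abs_atTop {a b : α → ℝ} {L : ℝ}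
    (hab : Tendsto (fun k => a k * b k) F (𝓝 L)) (ha : Tendsto (fun k => |a k|) F atTop) :
    Tendsto b F (𝓝 0) := by
  refine (tendsto_zero_iff_abs_tendsto_zero b).2 ((hab.abs.div_atTop ha).congr' ?_)
  filter_upwards [ha.eventually_gt_atTop 0] with k hk
  rw [abs_mul, mul_div_cancel_left₀ _ hk.ne', Function.comp_apply]

lemma tendsto_dphi (hc : c ≠ 0) (hμ : Tendsto μ F (𝓝 0)) (hx : Tendsto x F (𝓝 c)) :
    Tendsto (fun k => dphi p (μ k) (x k)) F (𝓝 (p * Real.sign c * |c| ^ (p - 1))) := by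
  rw [← dphi_zero_smoothing p hc]
  exact (continuousAt_dphi p hc).tendsto.comp (hμ.prodMk_nhds hx)

lemma tendsto_d2phi (hc : c ≠ 0) (hμ : Tendsto μ F (𝓝 0)) (hx : Tendsto x F (𝓝 c)) :
    Tendsto (fun k => d2phi p (μ k) (x k)) F (𝓝 (p * (p - 1) * |c| ^ (p - 2))) := by
  have := (continuousAt_d2phi p hc).tendsto.comp (hμ.prodMk_nhds hx)
  rwa [d2phi_zero_smoothing p hc] at this

lemma tendsto_abs_d2phi_atTop {d : ℝ} (hp : 0 < p) (hp1 : p ≤ 1) (hμ0 : ∀ k, μ k ≠ 0)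
    (hμ : Tendsto μ F (𝓝 0)) (hx : Tendsto x F (𝓝 0))
    (hd : Tendsto (fun k => dphi p (μ k) (x k)) F (𝓝 d)) (hd1 : p = 1 → |d| ≠ 1) :
    Tendsto (fun k => |d2phi p (μ k) (x k)|) F atTop := by
  set t : α → ℝ := fun k => x k ^ 2 + μ k ^ 2
  have ht_pos : ∀ k, 0 < t k := fun k => by have := hμ0 k; positivity
  have ht : Tendsto t F (𝓝[>] 0) := by
    refine tendsto_nhdsWithin_of_tendsto_nhds_of_eventually_within _ ?_
      (Eventually.of_forall ht_pos)
    simpa using (hx.pow 2).add (hμ.pow 2)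
  -- `0 ^ (1 - p)` is `0` for `p < 1` and `1` for `p = 1`
  have hs : Tendsto (fun k => x k ^ 2 / t k) F (𝓝 ((d / p) ^ 2 * 0 ^ (1 - p))) := by
    simp only [t, sq_div_eq_dphi_sq hp.ne' (hμ0 _)]
    exact ((hd.div_const p).pow 2).mul
      ((Real.continuousAt_rpow_const 0 (1 - p) (Or.inr (by linarith))).tendsto.comp
        (tendsto_nhdsWithin_iff.1 ht).1)
  have hlim : 0 < |1 - (2 - p) * ((d / p) ^ 2 * 0 ^ (1 - p))| := by
    refine abs_pos.2 ?_
    rcases hp1.lt_or_eq with hp1 | rfl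
    · rw [Real.zero_rpow (by linarith)]
      norm_num
    · rw [sub_self, Real.rpow_zero, div_one, mul_one, ← sq_abs, sub_ne_zero, ne_comm,
        show (2 : ℝ) - 1 = 1 by norm_num, one_mul, Ne,
        pow_eq_one_iff_of_nonneg (abs_nonneg d) two_ne_zero]
      exact hd1 rfl
  have hblow : Tendsto (fun k => p * t k ^ (p / 2 - 1)) F atTop :=
    ((tendsto_rpow_neg_nhdsGT_zero (by linarith)).comp ht).const_mul_atTop hp
  refine (hblow.atTop_mul_pos hlim ((tendsto_const_nhds.sub (hs.const_mul _)).abs)).congr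
    fun k => ?_
  rw [d2phi_eq_rpow_mul p (hμ0 k), abs_mul,
    abs_of_pos (mul_pos hp (Real.rpow_pos_of_pos (ht_pos k) _))]

lemma tendsto_zero_of_tendsto_mul_d2phi {a z : α → ℝ} {d l L : ℝ} (hp : 0 < p) (hp1 : p ≤ 1)
    (hμ0 : ∀ k, μ k ≠ 0) (hμ : Tendsto μ F (𝓝 0)) (hx : Tendsto x F (𝓝 0))
    (hd : Tendsto (fun k => dphi p (μ k) (x k)) F (𝓝 d)) (hd1 : p = 1 → |d| ≠ 1)
    (ha : Tendsto a F (𝓝 l)) (hl : l ≠ 0)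
    (h : Tendsto (fun k => a k * d2phi p (μ k) (x k) * z k) F (𝓝 L)) :
    Tendsto z F (𝓝 0) := by
  have hblow : Tendsto (fun k => |a k * d2phi p (μ k) (x k)|) F atTop := by
    simpa only [abs_mul] using
      ha.abs.pos_mul_atTop (abs_pos.2 hl) (tendsto_abs_d2phi_atTop hp hp1 hμ0 hμ hx hd hd1)
  exact tendsto_zero_of_tendsto_mul_of_abs_atTop h hblow

end SmoothingLimits

section PartialDerivatives

variable {n : ℕ}

lemma pd_add_sum_mul {ι : Type*} (s : Finset ι) (c : ι → ℝ) {g : (Fin n → ℝ) → ℝ}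
    {R : ι → (Fin n → ℝ) → ℝ} {w : Fin n → ℝ} (hg : DifferentiableAt ℝ g w)
    (hR : ∀ j ∈ s, DifferentiableAt ℝ (R j) w) (i : Fin n) :
    pd (fun x => g x + ∑ j ∈ s, c j * R j x) w i = pd g w i + ∑ j ∈ s, c j * pd (R j) w i := by
  have hD := hg.hasFDerivAt.fun_add (HasFDerivAt.fun_sum fun j hj =>
    (hR j hj).hasFDerivAt.const_mul (c j))
  simp [pd, hD.fderiv]

lemma contDiff_pd {h : (Fin n → ℝ) → ℝ} (hh : ContDiff ℝ 2 h) (i : Fin n) :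
    ContDiff ℝ 1 (fun w => pd h w i) :=
  (hh.fderiv_right (by norm_num)).clm_apply contDiff_const

lemma continuous_pd {h : (Fin n → ℝ) → ℝ} (hh : ContDiff ℝ 1 h) (i : Fin n) :
    Continuous (fun w => pd h w i) :=
  (hh.continuous_fderiv one_ne_zero).clm_apply continuous_const

lemma continuous_pd2 {h : (Fin n → ℝ) → ℝ} (hh : ContDiff ℝ 2 h) (i j : Fin n) :
    Continuous (fun w => pd2 h w i j) :=
  continuous_pd (contDiff_pd hh j) i

variable {r : ℕ} {g : (Fin n → ℝ) → ℝ} {R : Fin r → (Fin n → ℝ) → ℝ}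
  {G : (Fin n → ℝ) → (Fin r → ℝ) → ℝ} {s : Finset (Fin r)}

lemma pd_G (hg : ContDiff ℝ 1 g) (hR : ∀ j, ContDiff ℝ 1 (R j))
    (hG : ∀ w lam, G w lam = g w + ∑ j ∈ s, lam j * R j w) (lam : Fin r → ℝ)
    (w : Fin n → ℝ) (i : Fin n) :
    pd (fun x => G x lam) w i = pd g w i + ∑ j ∈ s, lam j * pd (R j) w i := by
  simp only [hG]
  exact pd_add_sum_mul s lam (hg.differentiable one_ne_zero w)
    (fun j _ => (hR j).differentiable one_ne_zero w) i

lemma pd2_G (hg : ContDiff ℝ 2 g) (hR : ∀ j, ContDiff ℝ 2 (R j))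
    (hG : ∀ w lam, G w lam = g w + ∑ j ∈ s, lam j * R j w) (lam : Fin r → ℝ)
    (w : Fin n → ℝ) (i j : Fin n) :
    pd2 (fun x => G x lam) w i j = pd2 g w i j + ∑ l ∈ s, lam l * pd2 (R l) w i j := by
  simp only [pd2, pd_G (hg.of_le one_le_two) (fun l => (hR l).of_le one_le_two) hG]
  exact pd_add_sum_mul s lam ((contDiff_pd hg j).differentiable one_ne_zero w)
    (fun l _ => (contDiff_pd (hR l) j).differentiable one_ne_zero w) i

lemma continuous_pd_G (hg : ContDiff ℝ 1 g) (hR : ∀ j, ContDiff ℝ 1 (R j))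
    (hG : ∀ w lam, G w lam = g w + ∑ j ∈ s, lam j * R j w) (i : Fin n) :
    Continuous (fun x : (Fin n → ℝ) × (Fin r → ℝ) => pd (fun w => G w x.2) x.1 i) := by
  simp only [pd_G hg hR hG]
  exact ((continuous_pd hg i).comp continuous_fst).add (continuous_finsetSum s fun j _ =>
    ((continuous_apply j).comp continuous_snd).mul ((continuous_pd (hR j) i).comp continuous_fst))

lemma continuous_pd2_G (hg : ContDiff ℝ 2 g) (hR : ∀ j, ContDiff ℝ 2 (R j))
    (hG : ∀ w lam, G w lam = g w + ∑ j ∈ s, lam j * R j w) (i j : Fin n) :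
    Continuous (fun x : (Fin n → ℝ) × (Fin r → ℝ) => pd2 (fun w => G w x.2) x.1 i j) := by
  simp only [pd2_G hg hR hG]
  exact ((continuous_pd2 hg i j).comp continuous_fst).add (continuous_finsetSum s fun l _ =>
    ((continuous_apply l).comp continuous_snd).mul
      ((continuous_pd2 (hR l) i j).comp continuous_fst))

end PartialDerivatives

lemma hasDerivAt_sign_mul_abs_rpow (q : ℝ) {c : ℝ} (hc : c ≠ 0) :
    HasDerivAt (fun y => Real.sign y * |y| ^ q) (q * |c| ^ (q - 1)) c := by
  rcases hc.lt_or_gt with hc | hc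
  · have h := ((Real.hasDerivAt_rpow_const (p := q) (Or.inl (neg_ne_zero.2 hc.ne))).comp c
      (hasDerivAt_neg c)).neg
    refine (h.congr_of_eventuallyEq ?_).congr_deriv ?_
    · filter_upwards [eventually_lt_nhds hc] with y hy
      simp [Real.sign_of_neg hy, abs_of_neg hy]
    · simp [abs_of_neg hc]
  · refine ((Real.hasDerivAt_rpow_const (p := q) (Or.inl hc.ne')).congr_of_eventuallyEq
      ?_).congr_deriv ?_
    · filter_upwards [eventually_gt_nhds hc] with y hy
      simp [Real.sign_of_pos hy, abs_of_pos hy]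
    · simp [abs_of_pos hc]

section Gradient

variable {n r : ℕ} [NeZero r] {g : (Fin n → ℝ) → ℝ} {R : Fin r → (Fin n → ℝ) → ℝ}
  {G : (Fin n → ℝ) → (Fin r → ℝ) → ℝ} {s : Finset (Fin r)}

lemma gradPhiC_eq_of_ne_zero (p : ℝ) (hg : ContDiff ℝ 2 g) (hR : ∀ j, ContDiff ℝ 2 (R j))
    (hG : ∀ w lam, G w lam = g w + ∑ j ∈ s, lam j * R j w) {i : Fin n}
    {x1 : Fin n → ℝ} (x2 : Fin r → ℝ) (hx : x1 i ≠ 0) :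
    gradPhiC p G i (x1, x2) =
      (fun k => pd2 (fun w => G w x2) x1 k i
          + p * x2 0 * ((p - 1) * |x1 i| ^ (p - 2)) * (Pi.single k 1 : Fin n → ℝ) i,
        fun j => ∑ l ∈ s, pd (R l) x1 i * (Pi.single j 1 : Fin r → ℝ) l
          + p * (Real.sign (x1 i) * |x1 i| ^ (p - 1)) * (Pi.single j 1 : Fin r → ℝ) 0) := by
  set X : (Fin n → ℝ) × (Fin r → ℝ) := (x1, x2)
  have hfst : ∀ {h : (Fin n → ℝ) → ℝ} {h'}, HasFDerivAt h h' x1 →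
      HasFDerivAt (fun x : (Fin n → ℝ) × (Fin r → ℝ) => h x.1)
        (h'.comp (ContinuousLinearMap.fst ℝ _ _)) X :=
    fun hh => hh.comp X hasFDerivAt_fst
  have hsnd : ∀ j, HasFDerivAt (fun x : (Fin n → ℝ) × (Fin r → ℝ) => x.2 j)
      ((ContinuousLinearMap.proj j).comp (ContinuousLinearMap.snd ℝ _ _)) X :=
    fun j => ((ContinuousLinearMap.proj (R := ℝ) (φ := fun _ : Fin r => ℝ) j).comp
      (ContinuousLinearMap.snd ℝ (Fin n → ℝ) (Fin r → ℝ))).hasFDerivAt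
  have hpd : ∀ {h : (Fin n → ℝ) → ℝ}, ContDiff ℝ 2 h →
      HasFDerivAt (fun w => pd h w i) (fderiv ℝ (fun w => pd h w i) x1) x1 :=
    fun hh => ((contDiff_pd hh i).differentiable one_ne_zero x1).hasFDerivAt
  have hΨ := (hfst (hpd hg)).fun_add
    (HasFDerivAt.fun_sum (u := s) fun j _ => (hsnd j).fun_mul (hfst (hpd (hR j))))
  have hΘ := ((hsnd 0).const_mul p).fun_mul
    ((hasDerivAt_sign_mul_abs_rpow (p - 1) hx).comp_hasFDerivAt X
      (hfst (hasFDerivAt_apply i x1)))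
  have hPhi : PhiC p G i = fun x => (pd g x.1 i + ∑ j ∈ s, x.2 j * pd (R j) x.1 i)
      + p * x.2 0 * (Real.sign (x.1 i) * |x.1 i| ^ (p - 1)) := by
    funext x
    rw [PhiC, pd_G (hg.of_le one_le_two) (fun j => (hR j).of_le one_le_two) hG]
    ring
  have hD := hΨ.fun_add hΘ
  simp only [Function.comp_def] at hD
  rw [← hPhi] at hD
  rw [gradPhiC, hD.fderiv, Prod.mk.injEq]
  constructor
  · funext k
    rw [pd2_G hg hR hG]
    simp only [pd, show p - 1 - 1 = p - 2 by ring, add_apply, ContinuousLinearMap.comp_apply,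
      ContinuousLinearMap.coe_fst', _root_.sum_apply, smul_apply, smul_eq_mul,
      ContinuousLinearMap.coe_snd', ContinuousLinearMap.proj_apply, Pi.zero_apply, mul_zero,
      add_zero, pd2, add_right_inj, X]
    ring
  · funext j
    simp only [add_apply, ContinuousLinearMap.comp_apply, ContinuousLinearMap.coe_fst', map_zero,
      _root_.sum_apply, smul_apply, smul_eq_mul, mul_zero, ContinuousLinearMap.coe_snd',
      ContinuousLinearMap.proj_apply, zero_add, add_right_inj, X]
    ring

end Gradient

/-- The KKT conditions in the limit `μ, ε̂ → 0`, for multipliers rescaled by a factor tending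
to `σ`; `σ = 0` is the abnormal case. -/
structure IsLimitKKT {n r : ℕ} [NeZero r] (p σ : ℝ) (f : (Fin n → ℝ) → ℝ)
    (R : Fin r → (Fin n → ℝ) → ℝ) (G : (Fin n → ℝ) → (Fin r → ℝ) → ℝ)
    (w : Fin n → ℝ) (lam : Fin r → ℝ) (zeta : Fin n → ℝ) (beta : Fin r → ℝ) : Prop where
  zeta_eq_zero : ∀ i, w i = 0 → zeta i = 0
  beta_zero_eq : p * ∑ i ∈ univ.filter (fun i => w i ≠ 0),
    Real.sign (w i) * |w i| ^ (p - 1) * zeta i = beta 0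
  stationary : ∀ i, w i ≠ 0 → σ * pd f w i + ∑ j, pd2 (fun x => G x lam) w i j * zeta j
    + lam 0 * (p * (p - 1) * |w i| ^ (p - 2)) * zeta i = 0
  constraint : ∀ j, j ≠ 0 → ∑ i, pd (R j) w i * zeta i = beta j
  complementary : ∀ j, lam j * beta j = 0

lemma sum_subtype_eq_sum {ι M : Type*} [Fintype ι] [AddCommMonoid M] {P : ι → Prop}
    [DecidablePred P] {f : ι → M} (hf : ∀ i, ¬ P i → f i = 0) :
    ∑ i : {i // P i}, f i = ∑ i, f i := by
  rw [← Fintype.sum_subtype_add_sum_subtype P f,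
    Finset.sum_eq_zero (fun (i : {i // ¬ P i}) _ => hf i i.2), add_zero]

lemma mem_span_coordinates {n r : ℕ} {P : Fin n → Prop} {Q : Fin r → Prop}
    {y : (Fin n → ℝ) × (Fin r → ℝ)} (h1 : ∀ k, ¬ P k → y.1 k = 0) (h2 : ∀ j, ¬ Q j → y.2 j = 0) :
    y ∈ Submodule.span ℝ (Set.range (Sum.elim
      (fun i : {i // P i} => ((Pi.single i.1 1, 0) : (Fin n → ℝ) × (Fin r → ℝ)))
      (fun j : {j // Q j} => ((0, Pi.single j.1 1) : (Fin n → ℝ) × (Fin r → ℝ))))) := by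
  have hy : y = ∑ k, y.1 k • ((Pi.single k 1, 0) : (Fin n → ℝ) × (Fin r → ℝ))
      + ∑ j, y.2 j • ((0, Pi.single j 1) : (Fin n → ℝ) × (Fin r → ℝ)) := by
    ext <;> simp [Prod.fst_sum, Prod.snd_sum, Finset.sum_apply, Pi.single_apply]
  rw [hy]
  refine add_mem (sum_mem fun k _ => ?_) (sum_mem fun j _ => ?_)
  · by_cases hk : P k
    · exact Submodule.smul_mem _ _ (Submodule.subset_span ⟨Sum.inl ⟨k, hk⟩, rfl⟩)
    · simp [h1 k hk]
  · by_cases hj : Q j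
    · exact Submodule.smul_mem _ _ (Submodule.subset_span ⟨Sum.inr ⟨j, hj⟩, rfl⟩)
    · simp [h2 j hj]

section LICQ

variable {n r : ℕ} [NeZero r] {p : ℝ} {f g : (Fin n → ℝ) → ℝ}
  {R : Fin r → (Fin n → ℝ) → ℝ} {G : (Fin n → ℝ) → (Fin r → ℝ) → ℝ}
  {w : Fin n → ℝ} {lam : Fin r → ℝ} {zeta : Fin n → ℝ} {beta : Fin r → ℝ}

theorem IsLimitKKT.sum_smul_gradPhiC_mem_span (hg : ContDiff ℝ 2 g)
    (hR : ∀ j, ContDiff ℝ 2 (R j))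
    (hG : ∀ w lam, G w lam = g w + ∑ j ∈ univ.filter (fun j : Fin r => j ≠ 0), lam j * R j w)
    (h : IsLimitKKT p 0 f R G w lam zeta beta) :
    ∑ i : {i // w i ≠ 0}, zeta i • gradPhiC p G i (w, lam) ∈ Submodule.span ℝ (Set.range
      (Sum.elim
        (fun i : {i : Fin n // w i = 0} => ((Pi.single i.1 1, 0) : (Fin n → ℝ) × (Fin r → ℝ)))
        (fun j : {j : Fin r // lam j = 0} =>
          ((0, Pi.single j.1 1) : (Fin n → ℝ) × (Fin r → ℝ))))) := by
  classical
  have hsum : ∑ i : {i // w i ≠ 0}, zeta i • gradPhiC p G i (w, lam) = ∑ i, zeta i •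
      ((fun k => pd2 (fun x => G x lam) w k i
          + p * lam 0 * ((p - 1) * |w i| ^ (p - 2)) * (Pi.single k 1 : Fin n → ℝ) i,
        fun j => ∑ l ∈ univ.filter (fun l : Fin r => l ≠ 0),
            pd (R l) w i * (Pi.single j 1 : Fin r → ℝ) l
          + p * (Real.sign (w i) * |w i| ^ (p - 1)) * (Pi.single j 1 : Fin r → ℝ) 0) :
        (Fin n → ℝ) × (Fin r → ℝ)) := by
    rw [← sum_subtype_eq_sum (P := fun i => w i ≠ 0)]
    · exact Finset.sum_congr rfl fun i _ => by rw [gradPhiC_eq_of_ne_zero p hg hR hG lam i.2]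
    · intro i hi
      simp [h.zeta_eq_zero i (not_not.1 hi)]
  rw [hsum]
  -- off `I(w)` the `w`-block vanishes by stationarity with `σ = 0`; off `I(λ)` the `λ`-block
  -- is `βⱼ`, which vanishes by complementarity
  refine mem_span_coordinates (fun k hk => ?_) (fun j hj => ?_)
  · simp only [Pi.single_apply, mul_ite, mul_one, mul_zero, ne_eq, sum_ite_eq', mem_filter,
      mem_univ, true_and, ite_not, Prod.smul_mk, Prod.fst_sum, Finset.sum_apply, Pi.smul_apply,
      smul_eq_mul, mul_add, sum_add_distrib, ↓reduceIte]
    simp only [mul_comm (zeta _)]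
    linear_combination h.stationary k hk
  · simp only [Pi.single_apply, mul_ite, mul_one, mul_zero, ne_eq, sum_ite_eq', mem_filter,
      mem_univ, true_and, ite_not, Prod.smul_mk, Prod.snd_sum, Finset.sum_apply, Pi.smul_apply,
      smul_eq_mul, mul_add, sum_add_distrib, sum_ite_irrel, sum_const_zero]
    have hb : beta j = 0 := (mul_eq_zero.1 (h.complementary j)).resolve_left hj
    by_cases hj0 : j = 0
    · subst hj0
      rw [if_pos rfl, if_pos rfl, zero_add, ← hb, ← h.beta_zero_eq, Finset.mul_sum,
        Finset.sum_filter_of_ne fun i _ hi => by contrapose! hi; simp [hi]]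
      exact Finset.sum_congr rfl fun i _ => by ring
    · rw [if_neg hj0, if_neg (Ne.symm hj0), add_zero, ← hb, ← h.constraint j hj0]
      exact Finset.sum_congr rfl fun i _ => mul_comm _ _

theorem IsLimitKKT.eq_zero_of_licq (hg : ContDiff ℝ 2 g) (hR : ∀ j, ContDiff ℝ 2 (R j))
    (hG : ∀ w lam, G w lam = g w + ∑ j ∈ univ.filter (fun j : Fin r => j ≠ 0), lam j * R j w)
    (h : IsLimitKKT p 0 f R G w lam zeta beta) (hL : LICQ p G w lam) :
    zeta = 0 ∧ beta = 0 := by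
  rw [LICQ, linearIndependent_sum] at hL
  obtain ⟨hind, -, hdisj⟩ := hL
  have hV := Submodule.disjoint_def.1 hdisj _
    (Submodule.sum_mem _ fun i _ => Submodule.smul_mem _ _ (Submodule.subset_span ⟨i, rfl⟩))
    (h.sum_smul_gradPhiC_mem_span hg hR hG)
  have hzeta : zeta = 0 := by
    funext i
    by_cases hi : w i = 0
    · exact h.zeta_eq_zero i hi
    · exact Fintype.linearIndependent_iff.1 hind (fun i => zeta i) hV ⟨i, hi⟩
  refine ⟨hzeta, funext fun j => ?_⟩
  by_cases hj : j = 0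
  · simp [hj, ← h.beta_zero_eq, hzeta]
  · simp [← h.constraint j hj, hzeta]

end LICQ

structure ScaledResiduals {n r : ℕ} [NeZero r] (p σ : ℝ) (f : (Fin n → ℝ) → ℝ)
    (R : Fin r → (Fin n → ℝ) → ℝ) (G : (Fin n → ℝ) → (Fin r → ℝ) → ℝ)
    (w : Fin n → ℝ) (lam : Fin r → ℝ) (zeta : Fin n → ℝ) (beta : Fin r → ℝ)
    (μ ε : ℝ) : Prop where
  stationary : ∀ i, |σ * pd f w i + ∑ j, pd2 (fun x => G x lam) w i j * zeta j
    + lam 0 * d2phi p μ (w i) * zeta i| ≤ σ * ε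
  beta_zero : |∑ i, dphi p μ (w i) * zeta i - beta 0| ≤ σ * ε
  constraint : ∀ j, j ≠ 0 → |∑ i, pd (R j) w i * zeta i - beta j| ≤ σ * ε
  feasible : ∀ i, |pd (fun x => G x lam) w i + lam 0 * dphi p μ (w i)| ≤ ε
  lam_nonneg : ∀ j, 0 ≤ lam j
  beta_nonneg : ∀ j, 0 ≤ beta j
  complementary : |∑ j, lam j * beta j| ≤ σ * ε

theorem ApproxKKT.scaledResiduals {n r : ℕ} [NeZero r] {p σ μ ε : ℝ} {f : (Fin n → ℝ) → ℝ}
    {R : Fin r → (Fin n → ℝ) → ℝ} {G : (Fin n → ℝ) → (Fin r → ℝ) → ℝ}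
    {w : Fin n → ℝ} {lam : Fin r → ℝ} {zeta : Fin n → ℝ} {beta : Fin r → ℝ}
    (h : ApproxKKT p f R G w lam zeta beta μ ε) (hσ : 0 < σ) :
    ScaledResiduals p σ f R G w lam (σ • zeta) (σ • beta) μ ε := by
  obtain ⟨e1, e2, e3, e4, e5, h1, h2, h3, h4, hlam, hbeta, h5, hε⟩ := h
  have hle : ∀ e : ℝ, e ^ 2 ≤ (∑ i, (e1 i) ^ 2) + e2 ^ 2
      + (∑ i ∈ univ.filter (fun i : Fin r => i ≠ 0), (e3 i) ^ 2)
      + (∑ i, (e4 i) ^ 2) + e5 ^ 2 → |e| ≤ ε :=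
    fun e he => (Real.abs_le_sqrt he).trans hε
  have s1 : 0 ≤ ∑ i, (e1 i) ^ 2 := sum_nonneg fun _ _ => sq_nonneg _
  have s3 : 0 ≤ ∑ i ∈ univ.filter (fun i : Fin r => i ≠ 0), (e3 i) ^ 2 :=
    sum_nonneg fun _ _ => sq_nonneg _
  have s4 : 0 ≤ ∑ i, (e4 i) ^ 2 := sum_nonneg fun _ _ => sq_nonneg _
  have hscale : ∀ e : ℝ, |e| ≤ ε → |σ * e| ≤ σ * ε := fun e he => by
    rw [abs_mul, abs_of_pos hσ]
    exact mul_le_mul_of_nonneg_left he hσ.le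
  refine ⟨fun i => ?_, ?_, fun j hj => ?_, fun i => ?_, hlam, fun j => ?_, ?_⟩
  · have := single_le_sum (fun i _ => sq_nonneg (e1 i)) (mem_univ i)
    convert hscale _ (hle (e1 i) (by linarith [sq_nonneg e2, sq_nonneg e5])) using 2
    simp only [Pi.smul_apply, smul_eq_mul, ← h1 i, mul_add, Finset.mul_sum, mul_left_comm σ]
    ring
  · convert hscale _ (hle e2 (by linarith [sq_nonneg e5])) using 2
    simp only [Pi.smul_apply, smul_eq_mul, ← h2, mul_sub, Finset.mul_sum, mul_left_comm σ]
  · have := single_le_sum (s := univ.filter (fun i : Fin r => i ≠ 0)) (f := fun i => e3 i ^ 2)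
      (fun i _ => sq_nonneg (e3 i)) (by simpa using hj)
    convert hscale _ (hle (e3 j) (by linarith [sq_nonneg e2, sq_nonneg e5])) using 2
    simp only [Pi.smul_apply, smul_eq_mul, ← h3 j hj, mul_sub, Finset.mul_sum, mul_left_comm σ]
  · have := single_le_sum (fun i _ => sq_nonneg (e4 i)) (mem_univ i)
    rw [h4 i]
    exact hle _ (by linarith [sq_nonneg e2, sq_nonneg e5])
  · exact mul_nonneg hσ.le (hbeta j)
  · convert hscale _ (hle e5 (by linarith [sq_nonneg e2])) using 2
    simp only [Pi.smul_apply, smul_eq_mul, ← h5, Finset.mul_sum, mul_left_comm σ]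

section Limits

variable {α : Type*} {F : Filter α} {n r : ℕ} [NeZero r] {p : ℝ} {f g : (Fin n → ℝ) → ℝ}
  {R : Fin r → (Fin n → ℝ) → ℝ} {G : (Fin n → ℝ) → (Fin r → ℝ) → ℝ} {s : Finset (Fin r)}
  {W : α → Fin n → ℝ} {Λ : α → Fin r → ℝ} {Z : α → Fin n → ℝ} {B : α → Fin r → ℝ}
  {μ ε σ : α → ℝ} {ws : Fin n → ℝ} {ls : Fin r → ℝ} {zs : Fin n → ℝ} {bs : Fin r → ℝ} {σs : ℝ}

lemma tendsto_dphi_of_residuals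
    (hres : ∀ k, ScaledResiduals p (σ k) f R G (W k) (Λ k) (Z k) (B k) (μ k) (ε k))
    (hg : ContDiff ℝ 1 g) (hR : ∀ j, ContDiff ℝ 1 (R j))
    (hG : ∀ w lam, G w lam = g w + ∑ j ∈ s, lam j * R j w) (hε : Tendsto ε F (𝓝 0))
    (hW : Tendsto W F (𝓝 ws)) (hΛ : Tendsto Λ F (𝓝 ls)) (hls0 : ls 0 ≠ 0) (i : Fin n) :
    Tendsto (fun k => dphi p (μ k) (W k i)) F (𝓝 (-pd (fun x => G x ls) ws i / ls 0)) := by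
  have hfeas := tendsto_zero_of_abs_le (fun k => (hres k).feasible i) hε
  have hpd := ((continuous_pd_G hg hR hG i).tendsto (ws, ls)).comp (hW.prodMk_nhds hΛ)
  have hΛ0 := tendsto_pi_nhds.1 hΛ 0
  refine (((hfeas.sub hpd).div hΛ0 hls0).congr' ?_).trans (by rw [zero_sub])
  filter_upwards [hΛ0.eventually_ne hls0] with k hk
  simp [mul_div_cancel_left₀ _ hk]

lemma tendsto_curvature_of_residuals
    (hres : ∀ k, ScaledResiduals p (σ k) f R G (W k) (Λ k) (Z k) (B k) (μ k) (ε k))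
    (hf : ContDiff ℝ 1 f) (hg : ContDiff ℝ 2 g) (hR : ∀ j, ContDiff ℝ 2 (R j))
    (hG : ∀ w lam, G w lam = g w + ∑ j ∈ s, lam j * R j w) (hε : Tendsto ε F (𝓝 0))
    (hσ : Tendsto σ F (𝓝 σs)) (hW : Tendsto W F (𝓝 ws)) (hΛ : Tendsto Λ F (𝓝 ls))
    (hZ : Tendsto Z F (𝓝 zs)) (i : Fin n) :
    Tendsto (fun k => Λ k 0 * d2phi p (μ k) (W k i) * Z k i) F
      (𝓝 (-(σs * pd f ws i + ∑ j, pd2 (fun x => G x ls) ws i j * zs j))) := by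
  have hres0 := tendsto_zero_of_abs_le (fun k => (hres k).stationary i)
    (by simpa using hσ.mul hε)
  have hpd2 : ∀ j, Tendsto (fun k => pd2 (fun x => G x (Λ k)) (W k) i j) F
      (𝓝 (pd2 (fun x => G x ls) ws i j)) := fun j =>
    ((continuous_pd2_G hg hR hG i j).tendsto (ws, ls)).comp (hW.prodMk_nhds hΛ)
  have hrest := (hσ.mul (((continuous_pd hf i).tendsto ws).comp hW)).add
    (tendsto_finsetSum univ fun j _ => (hpd2 j).mul (tendsto_pi_nhds.1 hZ j))
  refine ((hres0.sub hrest).congr fun k => ?_).trans (by rw [zero_sub])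
  simp only [Function.comp_apply]
  ring

lemma lam_mul_beta_eq_zero_of_residuals [F.NeBot]
    (hres : ∀ k, ScaledResiduals p (σ k) f R G (W k) (Λ k) (Z k) (B k) (μ k) (ε k))
    (hσε : Tendsto (fun k => σ k * ε k) F (𝓝 0)) (hΛ : Tendsto Λ F (𝓝 ls))
    (hB : Tendsto B F (𝓝 bs)) (j : Fin r) :
    ls j * bs j = 0 := by
  have hls : ∀ j, 0 ≤ ls j := fun j =>
    ge_of_tendsto' (tendsto_pi_nhds.1 hΛ j) fun k => (hres k).lam_nonneg j
  have hbs : ∀ j, 0 ≤ bs j := fun j =>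
    ge_of_tendsto' (tendsto_pi_nhds.1 hB j) fun k => (hres k).beta_nonneg j
  have hsum := tendsto_nhds_unique (tendsto_finsetSum univ fun j _ =>
    (tendsto_pi_nhds.1 hΛ j).mul (tendsto_pi_nhds.1 hB j))
    (tendsto_zero_of_abs_le (fun k => (hres k).complementary) hσε)
  exact (Finset.sum_eq_zero_iff_of_nonneg fun j _ => mul_nonneg (hls j) (hbs j)).1 hsum j
    (mem_univ j)

theorem isLimitKKT_of_tendsto [F.NeBot] (hp : 0 < p) (hp1 : p ≤ 1)
    (hres : ∀ k, ScaledResiduals p (σ k) f R G (W k) (Λ k) (Z k) (B k) (μ k) (ε k))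
    (hf : ContDiff ℝ 1 f) (hg : ContDiff ℝ 2 g) (hR : ∀ j, ContDiff ℝ 2 (R j))
    (hG : ∀ w lam, G w lam = g w + ∑ j ∈ s, lam j * R j w)
    (hμ0 : ∀ k, μ k ≠ 0) (hμ : Tendsto μ F (𝓝 0)) (hε : Tendsto ε F (𝓝 0))
    (hσ : Tendsto σ F (𝓝 σs)) (hW : Tendsto W F (𝓝 ws)) (hΛ : Tendsto Λ F (𝓝 ls))
    (hZ : Tendsto Z F (𝓝 zs)) (hB : Tendsto B F (𝓝 bs)) (hls0 : 0 < ls 0)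
    (hA3 : p = 1 → ∀ i, ws i = 0 → ls 0 ≠ |pd (fun x => G x ls) ws i|) :
    IsLimitKKT p σs f R G ws ls zs bs := by
  have hg1 := hg.of_le one_le_two
  have hR1 := fun j => (hR j).of_le one_le_two
  have hσε : Tendsto (fun k => σ k * ε k) F (𝓝 0) := by simpa using hσ.mul hε
  have hWi := tendsto_pi_nhds.1 hW
  have hZi := tendsto_pi_nhds.1 hZ
  have hdphi := tendsto_dphi_of_residuals hres hg1 hR1 hG hε hW hΛ hls0.ne'
  have hcurv := tendsto_curvature_of_residuals hres hf hg hR hG hε hσ hW hΛ hZ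
  have hzeta : ∀ i, ws i = 0 → zs i = 0 := fun i hi =>
    tendsto_nhds_unique (hZi i) <| tendsto_zero_of_tendsto_mul_d2phi hp hp1 hμ0 hμ (hi ▸ hWi i)
      (hdphi i) (fun hp1 => by
        rw [abs_div, abs_neg, abs_of_pos hls0, Ne, div_eq_one_iff_eq hls0.ne']
        exact (hA3 hp1 i hi).symm)
      (tendsto_pi_nhds.1 hΛ 0) hls0.ne' (hcurv i)
  refine ⟨hzeta, ?_, fun i hi => ?_, fun j hj => ?_, fun j => ?_⟩
  · have hterm : ∀ i, Tendsto (fun k => dphi p (μ k) (W k i) * Z k i) F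
        (𝓝 (p * Real.sign (ws i) * |ws i| ^ (p - 1) * zs i)) := by
      intro i
      by_cases hi : ws i = 0
      · simpa [hi, hzeta i hi] using (hdphi i).mul (hZi i)
      · exact (tendsto_dphi hi hμ (hWi i)).mul (hZi i)
    have := tendsto_nhds_unique (((tendsto_finsetSum univ fun i _ => hterm i).sub
      (tendsto_pi_nhds.1 hB 0))) (tendsto_zero_of_abs_le (fun k => (hres k).beta_zero) hσε)
    rw [Finset.sum_filter_of_ne fun i _ hi => by contrapose! hi; simp [hi], Finset.mul_sum]
    simp only [← mul_assoc]
    linear_combination this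
  · have := tendsto_nhds_unique (hcurv i)
      (((tendsto_pi_nhds.1 hΛ 0).mul (tendsto_d2phi hi hμ (hWi i))).mul (hZi i))
    linear_combination -this
  · have := tendsto_nhds_unique ((tendsto_finsetSum univ fun i _ =>
      ((((continuous_pd (hR1 j) i).tendsto ws).comp hW).mul (hZi i))).sub (tendsto_pi_nhds.1 hB j))
      (tendsto_zero_of_abs_le (fun k => (hres k).constraint j hj) hσε)
    linear_combination this
  · exact lam_mul_beta_eq_zero_of_residuals hres hσε hΛ hB j

end Limits

section Shift

variable {X : Type*} [TopologicalSpace X] {u : ℕ → X} {x : X}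

lemma MapClusterPt.of_tendsto_succ {U : Ultrafilter ℕ} (hU : (U : Filter ℕ) ≤ atTop)
    (h : Tendsto (fun k => u (k + 1)) U (𝓝 x)) : MapClusterPt x atTop u :=
  MapClusterPt.of_comp ((tendsto_add_atTop_nat 1).mono_left hU) h.mapClusterPt

lemma MapClusterPt.exists_ultrafilter_tendsto_succ (h : MapClusterPt x atTop u) :
    ∃ U : Ultrafilter ℕ, (U : Filter ℕ) ≤ atTop ∧ Tendsto (fun k => u (k + 1)) U (𝓝 x) := by
  refine mapClusterPt_iff_ultrafilter.1 ?_
  rw [MapClusterPt, ← map_add_atTop_eq_nat 1, Filter.map_map] at h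
  exact h

end Shift

lemma Ultrafilter.exists_tendsto_of_norm_le {α E : Type*} [SeminormedAddCommGroup E]
    [ProperSpace E] (U : Ultrafilter α) {u : α → E} {C : ℝ} (h : ∀ k, ‖u k‖ ≤ C) :
    ∃ a, Tendsto u U (𝓝 a) := by
  obtain ⟨a, -, ha⟩ := (isCompact_closedBall (0 : E) C).ultrafilter_le_nhds (U.map u) (by
    rw [Ultrafilter.coe_map, le_principal_iff]
    exact Eventually.of_forall (f := (U : Filter α)) fun k => mem_closedBall_zero_iff.2 (h k))
  exact ⟨a, ha⟩

lemma Ultrafilter.exists_tendsto_of_rescaled_limit_eq_zero {α E : Type*}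
    [NormedAddCommGroup E] [NormedSpace ℝ E] [ProperSpace E] (U : Ultrafilter α) (Y : α → E)
    (h : ∀ (σ : α → ℝ) (y : E), (∀ k, 0 < σ k) → Tendsto σ U (𝓝 0) →
      Tendsto (fun k => σ k • Y k) U (𝓝 y) → y = 0) :
    ∃ y, Tendsto Y U (𝓝 y) := by
  set σ : α → ℝ := fun k => (1 + ‖Y k‖)⁻¹
  have hσ : ∀ k, 0 < σ k := fun k => by positivity
  have hnorm : ∀ k, ‖σ k • Y k‖ = 1 - σ k := fun k => by
    have : σ k * (1 + ‖Y k‖) = 1 := inv_mul_cancel₀ (by positivity)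
    rw [norm_smul, Real.norm_of_nonneg (hσ k).le]
    linarith
  obtain ⟨σs, hσs⟩ := U.exists_tendsto_of_norm_le (C := 1) fun k => by
    rw [Real.norm_of_nonneg (hσ k).le]
    exact inv_le_one_of_one_le₀ (by simp)
  obtain ⟨y, hy⟩ := U.exists_tendsto_of_norm_le (C := 1) fun k => by
    rw [hnorm]
    linarith [hσ k]
  have hy_norm : ‖y‖ = 1 - σs :=
    tendsto_nhds_unique hy.norm ((tendsto_const_nhds.sub hσs).congr fun k => (hnorm k).symm)
  -- if `σ → 0`, then `σ • Y` would converge to a unit vector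
  have hσs0 : σs ≠ 0 := by
    rintro rfl
    simp [h σ y hσ hσs hy] at hy_norm
  refine ⟨σs⁻¹ • y, ((hσs.inv₀ hσs0).smul hy).congr fun k => ?_⟩
  rw [smul_smul, inv_mul_cancel₀ (hσ k).ne', one_smul]

theorem accumulation_point_conditions_general {n r : ℕ} [NeZero r] (p : ℝ)
    (hp : 0 < p) (hp1 : p ≤ 1)
    (f g : (Fin n → ℝ) → ℝ) (R : Fin r → (Fin n → ℝ) → ℝ)
    (hfC : ContDiff ℝ 1 f) (hgC : ContDiff ℝ 2 g) (hRC : ∀ i, ContDiff ℝ 2 (R i))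
    (G : (Fin n → ℝ) → (Fin r → ℝ) → ℝ)
    (hG : ∀ w lam, G w lam = g w + ∑ i ∈ univ.filter (fun i : Fin r => i ≠ 0), lam i * R i w)
    (w : ℕ → Fin n → ℝ) (lam : ℕ → Fin r → ℝ)
    (zeta : ℕ → Fin n → ℝ) (beta : ℕ → Fin r → ℝ)
    (μ εhat : ℕ → ℝ)
    (hμpos : ∀ k, 0 < μ k) (hμ : Tendsto μ atTop (nhds 0))
    (hε : Tendsto εhat atTop (nhds 0))
    -- (wᵏ⁺¹, λᵏ⁺¹, ζᵏ⁺¹, βᵏ⁺¹) is an ε̂ₖ-approximate KKT point with parameter μₖ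
    (hKKT : ∀ k, ApproxKKT p f R G (w (k + 1)) (lam (k + 1)) (zeta (k + 1)) (beta (k + 1))
      (μ k) (εhat k))
    -- A1
    (hA1 : 0 < Filter.liminf (fun k => lam k 0) atTop)
    -- A2
    (hA2 : ∃ C : ℝ, ∀ k, (∀ i, |w k i| ≤ C) ∧ (∀ i, |lam k i| ≤ C))
    -- A3
    (hA3 : p = 1 → ∀ (wstar : Fin n → ℝ) (lamstar : Fin r → ℝ),
      MapClusterPt (wstar, lamstar) atTop (fun k => (w k, lam k)) →
      ∀ i, wstar i = 0 → lamstar 0 ≠ |pd (fun x => G x lamstar) wstar i|)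
    -- A4
    (hA4 : ∀ (wstar : Fin n → ℝ) (lamstar : Fin r → ℝ),
      MapClusterPt (wstar, lamstar) atTop (fun k => (w k, lam k)) →
      LICQ p G wstar lamstar) :
    (∃ q : (Fin n → ℝ) × (Fin r → ℝ) × (Fin n → ℝ) × (Fin r → ℝ),
      MapClusterPt q atTop (fun k => (w k, lam k, zeta k, beta k))) ∧
    (∀ (wstar : Fin n → ℝ) (lamstar : Fin r → ℝ)
        (zetastar : Fin n → ℝ) (betastar : Fin r → ℝ),
      MapClusterPt (wstar, lamstar, zetastar, betastar) atTop
        (fun k => (w k, lam k, zeta k, beta k)) →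
      (∀ i, wstar i = 0 → zetastar i = 0) ∧
      ((p * ∑ i ∈ univ.filter (fun i => wstar i ≠ 0),
          Real.sign (wstar i) * |wstar i| ^ (p - 1) * zetastar i) = betastar 0)) := by
  obtain ⟨C, hC⟩ := hA2
  have hlam_bdd : IsBoundedUnder (· ≥ ·) atTop (fun k => lam k 0) :=
    ⟨-C, eventually_map.2 (Eventually.of_forall fun k => (abs_le.1 ((hC k).2 0)).1)⟩
  have hlimit : ∀ U : Ultrafilter ℕ, (U : Filter ℕ) ≤ atTop → ∀ ws ls,
      Tendsto (fun k => (w (k + 1), lam (k + 1))) U (𝓝 (ws, ls)) →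
      ∀ (σ : ℕ → ℝ) σs zs bs, (∀ k, 0 < σ k) → Tendsto σ U (𝓝 σs) →
        Tendsto (fun k => σ k • zeta (k + 1)) U (𝓝 zs) →
        Tendsto (fun k => σ k • beta (k + 1)) U (𝓝 bs) → IsLimitKKT p σs f R G ws ls zs bs := by
    intro U hU ws ls hwl σ σs zs bs hσ hσs hz hb
    have hclus : MapClusterPt (ws, ls) atTop (fun k => (w k, lam k)) := .of_tendsto_succ hU hwl
    have hls0 : 0 < ls 0 := hA1.trans_le
      ((hclus.continuousAt_comp (f := fun x => x.2 0) (by fun_prop)).liminf_le hlam_bdd)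
    exact isLimitKKT_of_tendsto hp hp1 (fun k => (hKKT k).scaledResiduals (hσ k)) hfC hgC hRC hG
      (fun k => (hμpos k).ne') (hμ.mono_left hU) (hε.mono_left hU) hσs hwl.fst_nhds
      hwl.snd_nhds hz hb hls0 fun h1 => hA3 h1 ws ls hclus
  constructor
  · obtain ⟨U, hU⟩ := exists_ultrafilter_le (atTop : Filter ℕ)
    have hC0 : 0 ≤ C := (abs_nonneg _).trans ((hC 0).2 0)
    obtain ⟨⟨ws, ls⟩, hwl⟩ := U.exists_tendsto_of_norm_le (C := C)
      (u := fun k => (w (k + 1), lam (k + 1))) fun k => norm_prod_le_iff.2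
        ⟨(pi_norm_le_iff_of_nonneg hC0).2 (hC _).1, (pi_norm_le_iff_of_nonneg hC0).2 (hC _).2⟩
    obtain ⟨⟨zs, bs⟩, hzb⟩ := U.exists_tendsto_of_rescaled_limit_eq_zero
      (fun k => (zeta (k + 1), beta (k + 1))) fun σ y hσ hσ0 hy => by
        obtain ⟨h1, h2⟩ := (hlimit U hU ws ls hwl σ 0 y.1 y.2 hσ hσ0 hy.fst_nhds
          hy.snd_nhds).eq_zero_of_licq hgC hRC hG (hA4 ws ls (.of_tendsto_succ hU hwl))
        exact Prod.ext h1 h2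
    exact ⟨(ws, ls, zs, bs),
      .of_tendsto_succ hU (hwl.fst_nhds.prodMk_nhds (hwl.snd_nhds.prodMk_nhds hzb))⟩
  · intro ws ls zs bs hq
    obtain ⟨U, hU, hlim⟩ := hq.exists_ultrafilter_tendsto_succ
    have h := hlimit U hU ws ls (hlim.fst_nhds.prodMk_nhds hlim.snd_nhds.fst_nhds) (fun _ => 1) 1
      zs bs (fun _ => one_pos) tendsto_const_nhds
      (by simpa using hlim.snd_nhds.snd_nhds.fst_nhds)
      (by simpa using hlim.snd_nhds.snd_nhds.snd_nhds)
    exact ⟨h.zeta_eq_zero, h.beta_zero_eq⟩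

/-- Proposition 4: under Assumptions A1–A4, the sequence
`{(wᵏ, λᵏ, ζᵏ, βᵏ)}` has at least one accumulation point, and every accumulation
point `(w*, λ*, ζ*, β*)` satisfies `ζᵢ* = 0` for all `i ∈ I(w*)` and
`p Σ_{i∉I(w*)} sgn(wᵢ*) |wᵢ*|^{p−1} ζᵢ* = β₁*`. -/
theorem accumulation_point_conditions {n r : ℕ} [NeZero r] (p : ℝ)
    (hp : 0 < p) (hp1 : p ≤ 1)
    (f g : (Fin n → ℝ) → ℝ) (R : Fin r → (Fin n → ℝ) → ℝ)
    (hfC : ContDiff ℝ 1 f) (hgC : ContDiff ℝ 2 g) (hRC : ∀ i, ContDiff ℝ 2 (R i))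
    (G : (Fin n → ℝ) → (Fin r → ℝ) → ℝ)
    (hG : ∀ w lam, G w lam = g w + ∑ i ∈ univ.filter (fun i : Fin r => i ≠ 0), lam i * R i w)
    (w : ℕ → Fin n → ℝ) (lam : ℕ → Fin r → ℝ)
    (zeta : ℕ → Fin n → ℝ) (beta : ℕ → Fin r → ℝ)
    (μ εhat : ℕ → ℝ)
    (hμpos : ∀ k, 0 < μ k) (hμ : Tendsto μ atTop (nhds 0))
    (hεnonneg : ∀ k, 0 ≤ εhat k) (hε : Tendsto εhat atTop (nhds 0))
    -- (wᵏ⁺¹, λᵏ⁺¹, ζᵏ⁺¹, βᵏ⁺¹) is an ε̂ₖ-approximate KKT point with parameter μₖ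
    (hKKT : ∀ k, ApproxKKT p f R G (w (k + 1)) (lam (k + 1)) (zeta (k + 1)) (beta (k + 1))
      (μ k) (εhat k))
    -- A1
    (hA1 : 0 < Filter.liminf (fun k => lam k 0) atTop)
    -- A2
    (hA2 : ∃ C : ℝ, ∀ k, (∀ i, |w k i| ≤ C) ∧ (∀ i, |lam k i| ≤ C))
    -- A3
    (hA3 : p = 1 → ∀ (wstar : Fin n → ℝ) (lamstar : Fin r → ℝ),
      MapClusterPt (wstar, lamstar) atTop (fun k => (w k, lam k)) →
      ∀ i, wstar i = 0 → lamstar 0 ≠ |pd (fun x => G x lamstar) wstar i|)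
    -- A4
    (hA4 : ∀ (wstar : Fin n → ℝ) (lamstar : Fin r → ℝ),
      MapClusterPt (wstar, lamstar) atTop (fun k => (w k, lam k)) →
      LICQ p G wstar lamstar) :
    (∃ q : (Fin n → ℝ) × (Fin r → ℝ) × (Fin n → ℝ) × (Fin r → ℝ),
      MapClusterPt q atTop (fun k => (w k, lam k, zeta k, beta k))) ∧
    (∀ (wstar : Fin n → ℝ) (lamstar : Fin r → ℝ)
        (zetastar : Fin n → ℝ) (betastar : Fin r → ℝ),
      MapClusterPt (wstar, lamstar, zetastar, betastar) atTop
        (fun k => (w k, lam k, zeta k, beta k)) →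
      (∀ i, wstar i = 0 → zetastar i = 0) ∧
      ((p * ∑ i ∈ univ.filter (fun i => wstar i ≠ 0),
          Real.sign (wstar i) * |wstar i| ^ (p - 1) * zetastar i) = betastar 0)) :=
  accumulation_point_conditions_general p hp hp1 f g R hfC hgC hRC G hG w lam zeta beta μ εhat hμpos
    hμ hε hKKT hA1 hA2 hA3 hA4
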